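/- Let m_i = (w_i, v_i) be pairs of integers for i = 1,...,n and B = (w, v). Then there exists a subset S of {1,...,n} with \sum_{i\in S} w_i = w and \sum_{i\in S} v_i = v if and only if there exists a subset S with \sum_{i\in S} (w_i + D v_i) = w + D v, where D = 1 + \sum_i (|w_i| + |v_i|) + |w| + |v|. -/

import Mathlib

/-!
A solution of the two-dimensional problem is a solution of the encoded one by linearity. Conversely,
if `A + D B = W + D V` for the partial sums `A = ∑_S w_i`, `B = ∑_S v_i`, then `D` divides `A - W`,
while `|A - W| ≤ ∑ |w_i| + |W| < D`; hence `A = W`, and then `B = V`.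
-/

open Finset

theorem Int.eq_and_eq_of_add_mul_eq_add_mul {D a b c d : ℤ} (h : a + D * b = c + D * d)
    (hac : |a - c| < D) : a = c ∧ b = d := by
  have hdvd : D ∣ a - c := ⟨d - b, by linear_combination h⟩
  have hac' : a = c := sub_eq_zero.mp (Int.eq_zero_of_abs_lt_dvd hdvd hac)
  have hD : D ≠ 0 := (lt_of_le_of_lt (abs_nonneg _) hac).ne'
  subst hac'
  exact ⟨rfl, mul_left_cancel₀ hD (add_left_cancel h)⟩

theorem Finset.abs_sum_le_sum_univ_abs {ι α : Type*} [Fintype ι] [AddCommGroup α] [LinearOrder α]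
    [IsOrderedAddMonoid α] (f : ι → α) (S : Finset ι) : |∑ i ∈ S, f i| ≤ ∑ i, |f i| :=
  (abs_sum_le_sum_abs f S).trans <|
    sum_le_sum_of_subset_of_nonneg (subset_univ S) fun i _ _ => abs_nonneg (f i)

theorem stmt_17 (n : ℕ) (w v : Fin n → ℤ) (W V : ℤ)
    (D : ℤ) (hD : D = 1 + (∑ i, (|w i| + |v i|)) + |W| + |V|) :
    (∃ S : Finset (Fin n), (∑ i ∈ S, w i) = W ∧ (∑ i ∈ S, v i) = V) ↔
      ∃ S : Finset (Fin n), (∑ i ∈ S, (w i + D * v i)) = W + D * V := by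
  simp only [sum_add_distrib, ← mul_sum]
  refine exists_congr fun S => ⟨fun ⟨hw, hv⟩ => by rw [hw, hv], fun h => ?_⟩
  refine Int.eq_and_eq_of_add_mul_eq_add_mul h ?_
  have hw : |∑ i ∈ S, w i| ≤ ∑ i, |w i| := abs_sum_le_sum_univ_abs w S
  have hv : ∑ i, |w i| ≤ ∑ i, (|w i| + |v i|) :=
    sum_le_sum fun i _ => le_add_of_nonneg_right (abs_nonneg (v i))
  calc |∑ i ∈ S, w i - W| ≤ |∑ i ∈ S, w i| + |W| := abs_sub _ _
    _ < D := by linarith [abs_nonneg V]
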